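/- arXiv:2208.08018 — 2 statements merged into one kernel-verified Lean document; each statement's English description precedes it below -/
import Mathlib

section
/- Fix ζ ∈ ℂ with ζ ≠ 0, a polynomial Λ, and a monic polynomial q₊ with simple roots, no root of q₊ being a root of Λ. Then there is at most one polynomial q₋ with deg(q₋) < deg(q₊) + 1 satisfying the qq-system q₊q₋' − q₋q₊' + 2ζq₊q₋ = Λ, i.e., if q₋ and q̃₋ are two such polynomial solutions, then q₋ = q̃₋. -/
open Polynomial

theorem qq_uniqueness_regular_twist (ζ : ℂ) (hζ : ζ ≠ 0) (Λ qp : Polynomial ℂ)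
    (hmonic : qp.Monic)
    (hsimple : ∀ w : ℂ, qp.eval w = 0 → (derivative qp).eval w ≠ 0)
    (hnoroot : ∀ w : ℂ, qp.eval w = 0 → Λ.eval w ≠ 0)
    (qm qm' : Polynomial ℂ)
    (hdeg : qm.natDegree < qp.natDegree + 1)
    (hdeg' : qm'.natDegree < qp.natDegree + 1)
    (hqq : qp * derivative qm - qm * derivative qp + C (2 * ζ) * (qp * qm) = Λ)
    (hqq' : qp * derivative qm' - qm' * derivative qp + C (2 * ζ) * (qp * qm') = Λ) :
    qm = qm' := by
  by_contra hne
  set d : Polynomial ℂ := qm - qm' with hd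
  have hd0 : d ≠ 0 := sub_ne_zero.mpr hne
  have key : qp * derivative d - d * derivative qp + C (2 * ζ) * (qp * d) = 0 := by
    rw [hd, derivative_sub]
    linear_combination hqq - hqq'
  set N := qp.natDegree + d.natDegree with hN
  have h1 : (qp * derivative d).coeff N = 0 := by
    rcases eq_or_ne (derivative d) 0 with h | h
    · simp [h]
    · apply coeff_eq_zero_of_natDegree_lt
      have hdnd : d.natDegree ≠ 0 := by
        intro h0
        exact h (by rw [eq_C_of_natDegree_eq_zero h0]; simp)
      have h2 := natDegree_derivative_lt hdnd
      have h3 := natDegree_mul_le (p := qp) (q := derivative d)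
      omega
  have h2 : (d * derivative qp).coeff N = 0 := by
    rcases eq_or_ne (derivative qp) 0 with h | h
    · simp [h]
    · apply coeff_eq_zero_of_natDegree_lt
      have hpnd : qp.natDegree ≠ 0 := by
        intro h0
        exact h (by rw [eq_C_of_natDegree_eq_zero h0]; simp)
      have h2 := natDegree_derivative_lt hpnd
      have h3 := natDegree_mul_le (p := d) (q := derivative qp)
      omega
  have h3 : (C (2 * ζ) * (qp * d)).coeff N = 2 * ζ * d.leadingCoeff := by
    rw [coeff_C_mul, hN, coeff_mul_degree_add_degree, hmonic.leadingCoeff, one_mul]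
  have hcoeff := congrArg (fun p => p.coeff N) key
  simp only [coeff_add, coeff_sub, h1, h2, h3, coeff_zero, zero_sub, neg_zero, zero_add] at hcoeff
  have h2z : (2 : ℂ) * ζ ≠ 0 := mul_ne_zero two_ne_zero hζ
  exact hd0 (leadingCoeff_eq_zero.mp ((mul_eq_zero.mp hcoeff).resolve_left h2z))
end

section
/- Let ζ ∈ ℂ, Λ a polynomial, and q₊ a polynomial with q₊(w) = 0, q₊'(w) ≠ 0, and suppose q₋ solves the qq-system q₊q₋' − q₋q₊' + 2ζq₊q₋ = Λ with Λ(w) ≠ 0. Then the root w of q₊ satisfies the sl₂ Bethe equation: 2ζ − q₊''(w)/q₊'(w) + Λ'(w)/Λ(w) = 0. -/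
open Polynomial

theorem sl2_bethe_equation (qp qm Λ : Polynomial ℂ) (ζ : ℂ) (w : ℂ)
    (hw : qp.eval w = 0) (hw' : (derivative qp).eval w ≠ 0)
    (hqq : qp * derivative qm - qm * derivative qp + C (2 * ζ) * (qp * qm) = Λ)
    (hΛ : Λ.eval w ≠ 0) :
    2 * ζ - (derivative (derivative qp)).eval w / (derivative qp).eval w +
      (derivative Λ).eval w / Λ.eval w = 0 := by
  have h1 : - (qm.eval w * (derivative qp).eval w) = Λ.eval w := by
    have := congrArg (eval w) hqq
    simpa [hw] using this
  have h2 : - (qm.eval w * (derivative (derivative qp)).eval w)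
      + 2 * ζ * ((derivative qp).eval w * qm.eval w) = (derivative Λ).eval w := by
    have := congrArg (fun p => (derivative p).eval w) hqq
    simp only [derivative_add, derivative_sub, derivative_mul, derivative_C,
      eval_add, eval_sub, eval_mul, eval_C, eval_zero, hw, zero_mul, mul_zero] at this
    linear_combination this
  field_simp
  linear_combination ((derivative (derivative qp)).eval w - 2 * ζ * (derivative qp).eval w) * h1 - (derivative qp).eval w * h2
end
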